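/- Corollary 7.1: let m ≥ 4 and let n be the least natural number (n ≥ 1) with G(n, m) = 0. Then n = 2·(2·n₂ + 1) for some natural number n₂ ≥ 2, and for every k with n₂ ≤ k < 2·n₂ one has G(k, m) = G(k+1, m). -/

import Mathlib

/-- `hsub b u m` substitutes the value `u` for the base `b` throughout the
hereditary base-`b` representation of `m` (with `hsub b u 0 = 0`). -/
def hsub (b u : ℕ) (m : ℕ) : ℕ :=
  if m = 0 then 0
  else
    u ^ hsub b u (Nat.log b m) * (m / b ^ Nat.log b m) + hsub b u (m % b ^ Nat.log b m)
termination_by m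
decreasing_by
  · exact Nat.log_lt_self b (by assumption)
  · have hpos : 0 < b ^ Nat.log b m := by
      rcases Nat.eq_zero_or_pos b with hb | hb
      · simp [hb]
      · exact Nat.pow_pos hb
    exact lt_of_lt_of_le (Nat.mod_lt _ hpos) (Nat.pow_log_le_self b (by assumption))

/-- Goodstein's base-change ("bumping") function: replace the base `b` by `b + 1`
throughout the hereditary base-`b` representation of `m` (with `B b 0 = 0`). -/
def B (b m : ℕ) : ℕ := hsub b (b + 1) m

/-- The Goodstein sequence of `m`: `G 1 m = m`, and `G (k+1) m = B (k+1) (G k m) - 1`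
for `k ≥ 1` (truncated subtraction), so the `k`-th term is written in hereditary
base `k + 1`. -/
def G : ℕ → ℕ → ℕ
  | 0, m => m
  | 1, m => m
  | (k + 2), m => B (k + 2) (G (k + 1) m) - 1

/-- The auxiliary Goodstein-type sequence: `L 1 k = k ^ k` (written in hereditary
base `k`), and `L (n+1) k = B (k+n-1) (L n k) - 1` for `n ≥ 1` (truncated
subtraction), so the `n`-th term is written in hereditary base `k + n - 1`. -/
def L : ℕ → ℕ → ℕ
  | 0, k => k ^ k
  | 1, k => k ^ k
  | (n + 2), k => B (k + n) (L (n + 1) k) - 1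

/-- `O b m` is the ordinal obtained by substituting `ω` for the base `b`
throughout the hereditary base-`b` representation of `m` (with `O b 0 = 0`). -/
noncomputable def O (b : ℕ) (m : ℕ) : Ordinal :=
  if m = 0 then 0
  else
    Ordinal.omega0 ^ O b (Nat.log b m) * ((m / b ^ Nat.log b m : ℕ) : Ordinal)
      + O b (m % b ^ Nat.log b m)
termination_by m
decreasing_by
  · exact Nat.log_lt_self b (by assumption)
  · have hpos : 0 < b ^ Nat.log b m := by
      rcases Nat.eq_zero_or_pos b with hb | hb
      · simp [hb]
      · exact Nat.pow_pos hb
    exact lt_of_lt_of_le (Nat.mod_lt _ hpos) (Nat.pow_log_le_self b (by assumption))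

/-! Let `t + 1` be the first index `T ≥ 1` at which the term is a single digit, `G T m ≤ T`.
A term `x` with `b ≤ x < 2 b` has the digits `1, x - b` in base `b`, so one step of the sequence
leaves it unchanged, while a term `x ≥ 2 b` strictly grows. Hence `G t m = G (t + 1) m = t + 1`,
after which the sequence counts down and first vanishes at `2 (t + 1)`. Before index `t` the
sequence is at least the base, so it is constant `t + 1` on a maximal interval `[S, t]` with
`t + 1 < 2 (S + 1)`; `m ≥ 4` forces `S ≥ 2`, and the term at `S - 1` must then be at least `2 S`
and below `t + 1`, so `t = 2 S`. -/

section BaseChange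

variable {b u x : ℕ}

lemma hsub_zero (b u : ℕ) : hsub b u 0 = 0 := by
  rw [hsub, if_pos rfl]

lemma hsub_of_ne_zero (hx : x ≠ 0) :
    hsub b u x = u ^ hsub b u (Nat.log b x) * (x / b ^ Nat.log b x)
      + hsub b u (x % b ^ Nat.log b x) := by
  rw [hsub, if_neg hx]

lemma hsub_of_lt (h : x < b) : hsub b u x = x := by
  rcases eq_or_ne x 0 with rfl | hx
  · exact hsub_zero b u
  · rw [hsub_of_ne_zero hx, Nat.log_eq_zero_iff.mpr (Or.inl h), pow_zero, Nat.mod_one,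
      hsub_zero]
    simp

lemma le_hsub (hb : 1 ≤ b) (hu : b ≤ u) (x : ℕ) : x ≤ hsub b u x := by
  induction x using Nat.strong_induction_on with
  | _ x ih =>
    rcases eq_or_ne x 0 with rfl | hx
    · exact Nat.zero_le _
    set e := Nat.log b x
    have hpow : b ^ e ≤ x := Nat.pow_log_le_self b hx
    have hexp : b ^ e ≤ u ^ hsub b u e :=
      (Nat.pow_le_pow_right hb (ih e (Nat.log_lt_self b hx))).trans (Nat.pow_le_pow_left hu _)
    have hmod : x % b ^ e ≤ hsub b u (x % b ^ e) :=
      ih _ ((Nat.mod_lt _ (Nat.pow_pos hb)).trans_le hpow)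
    calc x = b ^ e * (x / b ^ e) + x % b ^ e := (Nat.div_add_mod x _).symm
      _ ≤ u ^ hsub b u e * (x / b ^ e) + hsub b u (x % b ^ e) :=
        Nat.add_le_add (Nat.mul_le_mul_right _ hexp) hmod
      _ = hsub b u x := (hsub_of_ne_zero hx).symm

lemma B_of_lt (h : x < b) : B b x = x := hsub_of_lt h

lemma B_of_lt_sq (hb : 2 ≤ b) (h₁ : b ≤ x) (h₂ : x < b ^ 2) : B b x = x + x / b := by
  have hlog : Nat.log b x = 1 :=
    Nat.log_eq_of_pow_le_of_lt_pow (by simpa using h₁) (by simpa using h₂)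
  rw [B, hsub_of_ne_zero (by omega), hlog, pow_one, hsub_of_lt (by omega : 1 < b),
    hsub_of_lt (Nat.mod_lt x (by omega : 0 < b)), pow_one]
  have := Nat.div_add_mod x b
  linarith

lemma B_of_lt_two_mul (hb : 2 ≤ b) (h₁ : b ≤ x) (h₂ : x < 2 * b) : B b x = x + 1 := by
  rw [B_of_lt_sq hb h₁ (by nlinarith), Nat.div_eq_of_lt_le (k := 1) (by omega) (by omega)]

lemma pow_add_pow_le_succ_pow (b e : ℕ) : b ^ (e + 1) + b ^ e ≤ (b + 1) ^ (e + 1) :=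
  calc b ^ (e + 1) + b ^ e = b ^ e * (b + 1) := by ring
    _ ≤ (b + 1) ^ e * (b + 1) := Nat.mul_le_mul_right _ (Nat.pow_le_pow_left (by omega) e)
    _ = (b + 1) ^ (e + 1) := (pow_succ _ _).symm

lemma add_le_B_of_sq_le (hb : 2 ≤ b) (h : b ^ 2 ≤ x) : x + b ≤ B b x := by
  have hx : x ≠ 0 := by nlinarith
  set e := Nat.log b x
  obtain ⟨d, hd⟩ : ∃ d, e = d + 2 :=
    ⟨e - 2, by have := (Nat.le_log_iff_pow_le (by omega) hx).mpr h; omega⟩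
  have ha : 1 ≤ x / b ^ e := (Nat.one_le_div_iff (Nat.pow_pos (by omega))).mpr
    (Nat.pow_log_le_self b hx)
  -- already the leading power `b ^ e` grows by at least `b ^ (e - 1) ≥ b`
  have hexp : b ^ e + b ^ (d + 1) ≤ (b + 1) ^ hsub b (b + 1) e := by
    have := Nat.pow_le_pow_right (by omega : 1 ≤ b + 1)
      (le_hsub (by omega : 1 ≤ b) (by omega : b ≤ b + 1) e)
    rw [hd] at this ⊢
    exact (pow_add_pow_le_succ_pow b (d + 1)).trans this
  have hbd : b ≤ b ^ (d + 1) := Nat.le_self_pow (by omega) b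
  have hmod := le_hsub (by omega : 1 ≤ b) (by omega : b ≤ b + 1) (x % b ^ e)
  calc x + b ≤ (b ^ e + b ^ (d + 1)) * (x / b ^ e) + x % b ^ e := by
        have := Nat.div_add_mod x (b ^ e)
        nlinarith
    _ ≤ (b + 1) ^ hsub b (b + 1) e * (x / b ^ e) + hsub b (b + 1) (x % b ^ e) :=
        Nat.add_le_add (Nat.mul_le_mul_right _ hexp) hmod
    _ = B b x := (hsub_of_ne_zero hx).symm

lemma add_two_le_B (hb : 2 ≤ b) (h : 2 * b ≤ x) : x + 2 ≤ B b x := by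
  rcases lt_or_ge x (b ^ 2) with hsq | hsq
  · rw [B_of_lt_sq hb (by omega) hsq]
    have : 2 ≤ x / b := (Nat.le_div_iff_mul_le (by omega)).mpr (by omega)
    omega
  · have := add_le_B_of_sq_le hb hsq
    omega

end BaseChange

section Goodstein

variable {j m t : ℕ}

lemma G_succ (hj : 1 ≤ j) : G (j + 1) m = B (j + 1) (G j m) - 1 := by
  obtain ⟨k, rfl⟩ := Nat.exists_eq_add_of_le' hj
  rfl

lemma G_succ_of_le_self (hj : 1 ≤ j) (h : G j m ≤ j) : G (j + 1) m = G j m - 1 := by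
  rw [G_succ hj, B_of_lt (by omega)]

lemma G_succ_eq_of_lt_two_mul (hj : 1 ≤ j) (h₁ : j < G j m) (h₂ : G j m < 2 * (j + 1)) :
    G (j + 1) m = G j m := by
  rw [G_succ hj, B_of_lt_two_mul (by omega) h₁ h₂, Nat.add_sub_cancel]

lemma G_lt_G_succ (hj : 1 ≤ j) (h : 2 * (j + 1) ≤ G j m) : G j m < G (j + 1) m := by
  have := add_two_le_B (by omega) h
  rw [G_succ hj]
  omega

lemma G_add_of_le_self (hj : 1 ≤ j) (h : G j m ≤ j) : ∀ i, G (j + i) m = G j m - i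
  | 0 => rfl
  | i + 1 => by
    have ih := G_add_of_le_self hj h i
    rw [← add_assoc, G_succ_of_le_self (by omega) (by omega), ih, Nat.sub_sub]

lemma G_eq_succ_of_G_succ_le (hj : 1 ≤ j) (h : j < G j m) (h' : G (j + 1) m ≤ j + 1) :
    G j m = j + 1 := by
  rcases lt_or_ge (G j m) (2 * (j + 1)) with hlt | hge
  · have := G_succ_eq_of_lt_two_mul hj h hlt
    omega
  · have := G_lt_G_succ hj hge
    omega

lemma exists_G_eq_succ (hm : 2 ≤ m) (hz : ∃ j, 1 ≤ j ∧ G j m ≤ j) :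
    ∃ t, 1 ≤ t ∧ G t m = t + 1 ∧ G (t + 1) m = t + 1 ∧ ∀ i, 1 ≤ i → i ≤ t → i < G i m := by
  classical
  obtain ⟨T, ⟨hT, hGT⟩, hmin⟩ : ∃ T, (1 ≤ T ∧ G T m ≤ T) ∧ ∀ i < T, ¬(1 ≤ i ∧ G i m ≤ i) :=
    ⟨Nat.find hz, Nat.find_spec hz, fun _ => Nat.find_min hz⟩
  have hlt : ∀ i, 1 ≤ i → i < T → i < G i m := fun i hi hiT =>
    not_le.mp fun hle => hmin i hiT ⟨hi, hle⟩
  obtain ⟨t, rfl⟩ : ∃ t, T = t + 1 := ⟨T - 1, by omega⟩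
  have ht : 1 ≤ t := by
    by_contra h0
    obtain rfl : t = 0 := by omega
    exact absurd hGT (by change ¬m ≤ 1; omega)
  have hGt := G_eq_succ_of_G_succ_le ht (hlt t ht t.lt_succ_self) hGT
  refine ⟨t, ht, hGt, ?_, fun i hi hit => hlt i hi (by omega)⟩
  rw [G_succ_eq_of_lt_two_mul ht (by omega) (by omega), hGt]

lemma two_mul_le_of_G_eq_zero (hGt : G (t + 1) m = t + 1)
    (hlt : ∀ i, 1 ≤ i → i ≤ t → i < G i m) (hj : 1 ≤ j) (hz : G j m = 0) :
    2 * (t + 1) ≤ j := by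
  by_contra! hj'
  rcases le_or_gt j t with hjt | hjt
  · have := hlt j hj hjt
    omega
  · obtain ⟨i, rfl⟩ : ∃ i, j = t + 1 + i := ⟨j - (t + 1), by omega⟩
    rw [G_add_of_le_self (by omega) hGt.le, hGt] at hz
    omega

lemma exists_plateau (hm : 4 ≤ m) (ht : 1 ≤ t) (hGt : G t m = t + 1)
    (hlt : ∀ i, 1 ≤ i → i ≤ t → i < G i m) :
    ∃ S, 2 ≤ S ∧ t = 2 * S ∧ ∀ k, S ≤ k → k ≤ t → G k m = t + 1 := by
  classical
  have hex : ∃ S, 1 ≤ S ∧ ∀ k, S ≤ k → k ≤ t → G k m = t + 1 :=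
    ⟨t, ht, fun k hk hkt => by rwa [le_antisymm hkt hk]⟩
  obtain ⟨S, ⟨hS, hplat⟩, hmin⟩ : ∃ S, (1 ≤ S ∧ ∀ k, S ≤ k → k ≤ t → G k m = t + 1) ∧
      ∀ S' < S, ¬(1 ≤ S' ∧ ∀ k, S' ≤ k → k ≤ t → G k m = t + 1) :=
    ⟨Nat.find hex, Nat.find_spec hex, fun _ => Nat.find_min hex⟩
  have hSt : S ≤ t := not_lt.mp fun h => hmin t h ⟨ht, fun k hk hkt => by rwa [le_antisymm hkt hk]⟩
  have hGS := hplat S le_rfl hSt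
  have hupper : t ≤ 2 * S := by
    by_contra! h
    have := G_lt_G_succ (m := m) hS (by omega)
    rw [hGS, hplat (S + 1) (by omega) (by omega)] at this
    omega
  obtain ⟨s, rfl⟩ : ∃ s, S = s + 1 := ⟨S - 1, by omega⟩
  have hs : 1 ≤ s := by
    by_contra h0
    obtain rfl : s = 0 := by omega
    exact absurd hGS (by change m ≠ t + 1; omega)
  have hGs : G s m ≠ t + 1 := fun h => hmin s s.lt_succ_self
    ⟨hs, fun k hk hkt => by
      rcases hk.eq_or_lt with rfl | hk
      · exact h
      · exact hplat k hk hkt⟩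
  have hlower : 2 * (s + 1) ≤ G s m := by
    by_contra! h
    have := G_succ_eq_of_lt_two_mul hs (hlt s hs (by omega)) h
    exact hGs (by omega)
  have := G_lt_G_succ hs hlower
  exact ⟨s + 1, by omega, by omega, hplat⟩

end Goodstein

/-- **Corollary 7.1**: let `m ≥ 4` and let `n` be the least natural number
(`n ≥ 1`) with `G n m = 0`. Then `n = 2 * (2 * n₂ + 1)` for some `n₂ ≥ 2`, and
`G k m = G (k+1) m` for every `k` with `n₂ ≤ k < 2 * n₂`. -/
theorem goodstein_corollary7_1 (m n : ℕ) (hm : 4 ≤ m) (hn1 : 1 ≤ n) (hn : G n m = 0)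
    (hmin : ∀ j : ℕ, 1 ≤ j → G j m = 0 → n ≤ j) :
    ∃ n₂ : ℕ, 2 ≤ n₂ ∧ n = 2 * (2 * n₂ + 1) ∧
      ∀ k : ℕ, n₂ ≤ k → k < 2 * n₂ → G k m = G (k + 1) m := by
  obtain ⟨t, ht, hGt, hGt₁, hlt⟩ := exists_G_eq_succ (m := m) (by omega) ⟨n, hn1, by omega⟩
  have hzero : G (2 * (t + 1)) m = 0 := by
    rw [two_mul, G_add_of_le_self (by omega) hGt₁.le, hGt₁, Nat.sub_self]
  have hn_eq : n = 2 * (t + 1) :=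
    le_antisymm (hmin _ (by omega) hzero) (two_mul_le_of_G_eq_zero hGt₁ hlt hn1 hn)
  obtain ⟨S, hS, rfl, hplat⟩ := exists_plateau hm ht hGt hlt
  refine ⟨S, hS, hn_eq, fun k hk hk' => ?_⟩
  rw [hplat k hk (by omega), hplat (k + 1) (by omega) (by omega)]
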